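/- 825265 = 5 · 7 · 17 · 19 · 73 is the smallest Carmichael number with exactly five prime factors. -/

import Mathlib

def IsCarmichael (N : ℕ) : Prop :=
  1 < N ∧ ¬ N.Prime ∧ ∀ b : ℕ, Nat.Coprime b N → b ^ (N - 1) ≡ 1 [MOD N]

/-! ### Computational part -/

def korTest (q1 q2 q3 q4 t : ℕ) : Bool :=
  !(decide (Nat.gcd t (q1*q2*q3*q4) = 1) &&
    decide ((q1*q2*q3*q4*t - 1) % (q1-1) = 0) &&
    decide ((q1*q2*q3*q4*t - 1) % (q2-1) = 0) &&
    decide ((q1*q2*q3*q4*t - 1) % (q3-1) = 0) &&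
    decide ((q1*q2*q3*q4*t - 1) % (q4-1) = 0) &&
    decide ((q1*q2*q3*q4*t - 1) % (t-1) = 0))

def tloop : ℕ → ℕ → ℕ → ℕ → ℕ → ℕ → Bool :=
  Nat.rec (motive := fun _ => ℕ → ℕ → ℕ → ℕ → ℕ → Bool)
    (fun q1 q2 q3 q4 t => decide (825265 ≤ q1*q2*q3*q4*t))
    (fun _ ih q1 q2 q3 q4 t =>
      if 825265 ≤ q1*q2*q3*q4*t then true
      else korTest q1 q2 q3 q4 t && ih q1 q2 q3 q4 (t+2))

def L1 : List ℕ := [3,5,7,11,13]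
def L2 : List ℕ := [3,5,7,11,13,17,19]
def L3 : List ℕ := [3,5,7,11,13,17,19,23,29,31,37]
def L4 : List ℕ := [3,5,7,11,13,17,19,23,29,31,37,41,43,47,53,59,61,67,71,73,79,83]

def outerCheck : Bool :=
  L1.all fun q1 => L2.all fun q2 => L3.all fun q3 => L4.all fun q4 =>
    !(decide (q1 < q2) && decide (q2 < q3) && decide (q3 < q4)) || tloop 400 q1 q2 q3 q4 3

set_option maxRecDepth 100000 in
set_option maxHeartbeats 4000000 in
theorem outerCheck_true : outerCheck = true := by decide

theorem tloop_zero (q1 q2 q3 q4 t : ℕ) :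
    tloop 0 q1 q2 q3 q4 t = decide (825265 ≤ q1*q2*q3*q4*t) := rfl

theorem tloop_succ (f q1 q2 q3 q4 t : ℕ) :
    tloop (f+1) q1 q2 q3 q4 t =
      if 825265 ≤ q1*q2*q3*q4*t then true
      else korTest q1 q2 q3 q4 t && tloop f q1 q2 q3 q4 (t+2) := rfl

theorem tloop_sound (f : ℕ) : ∀ (q1 q2 q3 q4 t0 : ℕ), tloop f q1 q2 q3 q4 t0 = true →
    ∀ k, q1*q2*q3*q4*(t0+2*k) < 825265 → korTest q1 q2 q3 q4 (t0+2*k) = true := by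
  induction f with
  | zero =>
    intro q1 q2 q3 q4 t0 h k hk
    rw [tloop_zero, decide_eq_true_eq] at h
    have hle : q1*q2*q3*q4*t0 ≤ q1*q2*q3*q4*(t0+2*k) := Nat.mul_le_mul_left _ (by omega)
    omega
  | succ f ih =>
    intro q1 q2 q3 q4 t0 h k hk
    rw [tloop_succ] at h
    by_cases hge : 825265 ≤ q1*q2*q3*q4*t0
    · have hle : q1*q2*q3*q4*t0 ≤ q1*q2*q3*q4*(t0+2*k) := Nat.mul_le_mul_left _ (by omega)
      omega
    · rw [if_neg hge, Bool.and_eq_true] at h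
      cases k with
      | zero => simpa using h.1
      | succ k =>
        have heq : t0 + 2*(k+1) = (t0+2) + 2*k := by ring
        rw [heq] at hk ⊢
        exact ih q1 q2 q3 q4 (t0+2) h.2 k hk

/-! ### Korselt necessity -/

theorem gcd_eq_of_modeq {b c m : ℕ} (h : b ≡ c [MOD m]) : Nat.gcd b m = Nat.gcd c m := by
  calc Nat.gcd b m = Nat.gcd m b := Nat.gcd_comm _ _
  _ = Nat.gcd (b % m) m := Nat.gcd_rec _ _
  _ = Nat.gcd (c % m) m := by rw [h]
  _ = Nat.gcd m c := (Nat.gcd_rec _ _).symm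
  _ = Nat.gcd c m := Nat.gcd_comm _ _

theorem coprime_of_modeq_one {b m : ℕ} (h : b ≡ 1 [MOD m]) : Nat.Coprime b m := by
  have := gcd_eq_of_modeq h
  simpa [Nat.Coprime] using this.trans (Nat.gcd_one_left m)

theorem one_add_pow_modeq (p k : ℕ) : (1+p)^k ≡ 1 + k*p [MOD p^2] := by
  induction k with
  | zero => simpa using Nat.ModEq.refl 1
  | succ k ih =>
    calc (1+p)^(k+1) = (1+p)^k * (1+p) := pow_succ _ _
    _ ≡ (1+k*p) * (1+p) [MOD p^2] := ih.mul_right _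
    _ = (1+(k+1)*p) + k*p^2 := by ring
    _ ≡ (1+(k+1)*p) + 0 [MOD p^2] :=
        Nat.ModEq.add_left _ (Nat.modEq_zero_iff_dvd.mpr ⟨k, by ring⟩)
    _ = 1+(k+1)*p := by ring

theorem carmichael_not_even {N : ℕ} (h : IsCarmichael N) : ¬ 2 ∣ N := by
  obtain ⟨h1, hnp, hb⟩ := h
  intro h2
  obtain ⟨k, rfl⟩ := h2
  have hk2 : 2 ≤ k := by
    rcases Nat.lt_or_ge k 2 with hk | hk
    · interval_cases k
      · simp at h1
      · exact absurd (by norm_num : Nat.Prime (2*1)) hnp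
    · exact hk
  haveI : NeZero (2*k) := ⟨by omega⟩
  have hco : Nat.Coprime (2*k - 1) (2*k) := by
    have h1 : 2*k % (2*k-1) = 1 := by
      rw [Nat.mod_eq_sub_mod (by omega)]
      have h2 : 2*k - (2*k-1) = 1 := by omega
      rw [h2, Nat.mod_eq_of_lt (by omega)]
    rw [Nat.Coprime, Nat.gcd_rec, h1]
    exact Nat.gcd_one_left _
  have hmod := hb (2*k-1) hco
  have hcast := (ZMod.natCast_eq_natCast_iff _ _ _).mpr hmod
  push_cast at hcast
  have hneg : ((2*k - 1 : ℕ) : ZMod (2*k)) = -1 := by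
    have hadd : ((2*k - 1 : ℕ) : ZMod (2*k)) + ((1:ℕ) : ZMod (2*k)) = ((2*k : ℕ) : ZMod (2*k)) := by
      rw [← Nat.cast_add]; congr 1; omega
    rw [ZMod.natCast_self] at hadd
    push_cast at hadd
    linear_combination hadd
  rw [hneg] at hcast
  have hodd : Odd (2*k - 1) := ⟨k-1, by omega⟩
  rw [hodd.neg_one_pow] at hcast
  have h2z : ((2 : ℕ) : ZMod (2*k)) = 0 := by
    push_cast
    linear_combination - hcast
  rw [ZMod.natCast_eq_zero_iff] at h2z
  have := Nat.le_of_dvd (by norm_num) h2z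
  omega

theorem carmichael_squarefree {N : ℕ} (h : IsCarmichael N) : Squarefree N := by
  have h1 := h.1
  have hb := h.2.2
  rw [Nat.squarefree_iff_prime_squarefree]
  intro p hpp hdvd
  have hp : p.Prime := hpp
  have hN0 : N ≠ 0 := by omega
  set a := N.factorization p with ha
  set m := N / p ^ a with hm
  have hNeq : p ^ a * m = N := Nat.ordProj_mul_ordCompl_eq_self N p
  have hcop : Nat.Coprime p m := Nat.coprime_ordCompl hp hN0
  have ha2 : 2 ≤ a := by
    rw [ha, ← Nat.Prime.pow_dvd_iff_le_factorization hp hN0]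
    simpa [pow_two] using hdvd
  have hcopow : Nat.Coprime (p ^ a) m := Nat.Coprime.pow_left _ hcop
  obtain ⟨b, hb1, hb2⟩ := Nat.chineseRemainder hcopow (1+p) 1
  have hbp : Nat.Coprime b (p ^ a) := by
    apply Nat.Coprime.pow_right
    have hbmodp : b ≡ 1 + p [MOD p] := hb1.of_dvd (dvd_pow_self p (by omega))
    have hmod1 : b ≡ 1 [MOD p] := by
      calc b ≡ 1 + p [MOD p] := hbmodp
      _ ≡ 1 + 0 [MOD p] := Nat.ModEq.add_left _ (Nat.modEq_zero_iff_dvd.mpr dvd_rfl)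
      _ = 1 := by ring
    exact coprime_of_modeq_one hmod1
  have hbm : Nat.Coprime b m := coprime_of_modeq_one hb2
  have hbN : Nat.Coprime b N := by
    rw [← hNeq]; exact Nat.Coprime.mul_right hbp hbm
  have hmod := hb b hbN
  have hmodp2 : b ^ (N-1) ≡ 1 [MOD p^2] := hmod.of_dvd (by rw [pow_two]; exact hdvd)
  have hbp2 : b ≡ 1 + p [MOD p^2] := hb1.of_dvd (pow_dvd_pow p ha2)
  have hfin : 1 + (N-1)*p ≡ 1 [MOD p^2] :=
    ((one_add_pow_modeq p (N-1)).symm.trans ((hbp2.pow _).symm.trans hmodp2))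
  have hdvd2 : p^2 ∣ (N-1)*p := by
    have hd := (Nat.modEq_iff_dvd' (Nat.le_add_right _ _)).mp hfin.symm
    simpa using hd
  have hpN1 : p ∣ N - 1 := by
    rcases hdvd2 with ⟨c, hc⟩
    have hp0 : 0 < p := hp.pos
    have heq : (N-1) * p = (p * c) * p := by rw [hc]; ring
    exact ⟨c, Nat.eq_of_mul_eq_mul_right hp0 heq⟩
  have hpN : p ∣ N := (dvd_mul_right p p).trans hdvd
  have hone : p ∣ 1 := by
    have heq : N - (N - 1) = 1 := by omega
    rw [← heq]
    exact Nat.dvd_sub hpN hpN1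
  exact hp.one_lt.ne' (Nat.dvd_one.mp hone)

theorem carmichael_dvd {N p : ℕ} (h : IsCarmichael N) (hp : p.Prime) (hpN : p ∣ N) :
    (p - 1) ∣ (N - 1) := by
  have h1 := h.1
  have hb := h.2.2
  haveI : Fact p.Prime := ⟨hp⟩
  have hN0 : N ≠ 0 := by omega
  set a := N.factorization p with ha
  set m := N / p ^ a with hm
  have hNeq : p ^ a * m = N := Nat.ordProj_mul_ordCompl_eq_self N p
  have hcop : Nat.Coprime p m := Nat.coprime_ordCompl hp hN0
  have hcopow : Nat.Coprime (p ^ a) m := Nat.Coprime.pow_left _ hcop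
  have ha1 : 1 ≤ a := by
    rw [ha, ← Nat.Prime.pow_dvd_iff_le_factorization hp hN0]
    simpa using hpN
  obtain ⟨g, hg⟩ := IsCyclic.exists_generator (α := (ZMod p)ˣ)
  obtain ⟨b, hb1, hb2⟩ := Nat.chineseRemainder hcopow ((g : ZMod p)).val 1
  have hbmodp : b ≡ ((g : ZMod p)).val [MOD p] := hb1.of_dvd (dvd_pow_self p (by omega))
  have hbcast : (b : ZMod p) = (g : ZMod p) := by
    rw [(ZMod.natCast_eq_natCast_iff _ _ _).mpr hbmodp, ZMod.natCast_val, ZMod.cast_id]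
  have hbp : Nat.Coprime b (p ^ a) := by
    apply Nat.Coprime.pow_right
    rw [Nat.coprime_comm, hp.coprime_iff_not_dvd]
    intro hdvdb
    have hz : (b : ZMod p) = 0 := (ZMod.natCast_eq_zero_iff _ _).mpr hdvdb
    rw [hbcast] at hz
    exact g.ne_zero hz
  have hbm : Nat.Coprime b m := coprime_of_modeq_one hb2
  have hbN : Nat.Coprime b N := by rw [← hNeq]; exact Nat.Coprime.mul_right hbp hbm
  have hmod := hb b hbN
  have hmodp : b ^ (N-1) ≡ 1 [MOD p] := hmod.of_dvd hpN
  have hcast := (ZMod.natCast_eq_natCast_iff _ _ _).mpr hmodp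
  push_cast at hcast
  rw [hbcast] at hcast
  have hunit : g ^ (N-1) = 1 := by
    ext
    rw [Units.val_pow_eq_pow_val]
    simpa using hcast
  have horder : orderOf g = p - 1 := by
    rw [orderOf_eq_card_of_forall_mem_zpowers hg, Nat.card_eq_fintype_card, ZMod.card_units]
  rw [← horder]
  exact orderOf_dvd_of_pow_eq_one hunit

/-! ### Membership helpers -/

theorem mem_L1 {p : ℕ} (hp : p.Prime) (h2 : p ≠ 2) (hle : p ≤ 15) : p ∈ L1 := by
  have := hp.two_le
  interval_cases p <;> first
    | exact absurd rfl h2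
    | decide
    | norm_num at hp

theorem mem_L2 {p : ℕ} (hp : p.Prime) (h2 : p ≠ 2) (hle : p ≤ 22) : p ∈ L2 := by
  have := hp.two_le
  interval_cases p <;> first
    | exact absurd rfl h2
    | decide
    | norm_num at hp

theorem mem_L3 {p : ℕ} (hp : p.Prime) (h2 : p ≠ 2) (hle : p ≤ 38) : p ∈ L3 := by
  have := hp.two_le
  interval_cases p <;> first
    | exact absurd rfl h2
    | decide
    | norm_num at hp

theorem mem_L4 {p : ℕ} (hp : p.Prime) (h2 : p ≠ 2) (hle : p ≤ 88) : p ∈ L4 := by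
  have := hp.two_le
  interval_cases p <;> first
    | exact absurd rfl h2
    | decide
    | norm_num at hp

/-! ### 825265 is Carmichael -/

theorem prime_pow_modeq {b p k e : ℕ} (hp : p.Prime) (hco : Nat.Coprime b p)
    (he : e = (p - 1) * k) : b ^ e ≡ 1 [MOD p] := by
  have htot := Nat.ModEq.pow_totient hco
  rw [Nat.totient_prime hp] at htot
  calc b ^ e = (b ^ (p-1)) ^ k := by rw [he, pow_mul]
  _ ≡ 1 ^ k [MOD p] := htot.pow _
  _ = 1 := one_pow _

theorem isCarmichael_825265 : IsCarmichael 825265 := by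
  refine ⟨by norm_num, by norm_num, ?_⟩
  intro b hco
  show b ^ 825264 ≡ 1 [MOD 825265]
  have h5 : b ^ 825264 ≡ 1 [MOD 5] :=
    prime_pow_modeq (by norm_num) (Nat.Coprime.coprime_dvd_right (by norm_num) hco)
      (by norm_num : 825264 = (5-1) * 206316)
  have h7 : b ^ 825264 ≡ 1 [MOD 7] :=
    prime_pow_modeq (by norm_num) (Nat.Coprime.coprime_dvd_right (by norm_num) hco)
      (by norm_num : 825264 = (7-1) * 137544)
  have h17 : b ^ 825264 ≡ 1 [MOD 17] :=
    prime_pow_modeq (by norm_num) (Nat.Coprime.coprime_dvd_right (by norm_num) hco)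
      (by norm_num : 825264 = (17-1) * 51579)
  have h19 : b ^ 825264 ≡ 1 [MOD 19] :=
    prime_pow_modeq (by norm_num) (Nat.Coprime.coprime_dvd_right (by norm_num) hco)
      (by norm_num : 825264 = (19-1) * 45848)
  have h73 : b ^ 825264 ≡ 1 [MOD 73] :=
    prime_pow_modeq (by norm_num) (Nat.Coprime.coprime_dvd_right (by norm_num) hco)
      (by norm_num : 825264 = (73-1) * 11462)
  have h35 : b ^ 825264 ≡ 1 [MOD 5 * 7] :=
    (Nat.modEq_and_modEq_iff_modEq_mul (by norm_num)).mp ⟨h5, h7⟩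
  norm_num at h35
  have h595 : b ^ 825264 ≡ 1 [MOD 35 * 17] :=
    (Nat.modEq_and_modEq_iff_modEq_mul (by norm_num)).mp ⟨h35, h17⟩
  norm_num at h595
  have h11305 : b ^ 825264 ≡ 1 [MOD 595 * 19] :=
    (Nat.modEq_and_modEq_iff_modEq_mul (by norm_num)).mp ⟨h595, h19⟩
  norm_num at h11305
  have hfin : b ^ 825264 ≡ 1 [MOD 11305 * 73] :=
    (Nat.modEq_and_modEq_iff_modEq_mul (by norm_num)).mp ⟨h11305, h73⟩
  norm_num at hfin
  exact hfin

theorem primeFactors_825265 : (825265 : ℕ).primeFactors = {5, 7, 17, 19, 73} := by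
  rw [show (825265 : ℕ) = 5*7*17*19*73 by norm_num]
  rw [Nat.primeFactors_mul (by norm_num) (by norm_num),
      Nat.primeFactors_mul (by norm_num) (by norm_num),
      Nat.primeFactors_mul (by norm_num) (by norm_num),
      Nat.primeFactors_mul (by norm_num) (by norm_num),
      Nat.Prime.primeFactors (by norm_num), Nat.Prime.primeFactors (by norm_num),
      Nat.Prime.primeFactors (by norm_num), Nat.Prime.primeFactors (by norm_num),
      Nat.Prime.primeFactors (by norm_num)]
  decide

/-! ### Main theorem -/

theorem smallest_carmichael_five_factors :
    825265 = 5 * 7 * 17 * 19 * 73 ∧ IsCarmichael 825265 ∧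
    (825265 : ℕ).primeFactors.card = 5 ∧
    ∀ N : ℕ, IsCarmichael N → N.primeFactors.card = 5 → 825265 ≤ N := by
  refine ⟨by norm_num, isCarmichael_825265, by rw [primeFactors_825265]; decide, ?_⟩
  intro N hC hcard
  by_contra hlt
  push_neg at hlt
  have hN1 : 1 < N := hC.1
  have hodd : ¬ 2 ∣ N := carmichael_not_even hC
  have hsf : Squarefree N := carmichael_squarefree hC
  have hN0 : N ≠ 0 := by omega
  set S := N.primeFactors with hS
  have hlen : (S.sort (· ≤ ·)).length = 5 := by rw [Finset.length_sort, hcard]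
  have hsorted := (Finset.sortedLT_sort S).pairwise
  obtain ⟨a, b, c, d, e, hl⟩ : ∃ a b c d e, S.sort (· ≤ ·) = [a, b, c, d, e] := by
    rcases h : S.sort (· ≤ ·) with _ | ⟨a, _ | ⟨b, _ | ⟨c, _ | ⟨d, _ | ⟨e, _ | ⟨f, l⟩⟩⟩⟩⟩⟩ <;>
      rw [h] at hlen <;> simp_all
  rw [hl] at hsorted
  simp only [List.pairwise_cons, List.mem_cons, List.mem_singleton, List.not_mem_nil] at hsorted
  obtain ⟨ha', hb', hc', hd', -⟩ := hsorted
  have hab : a < b := ha' b (by simp)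
  have hac : a < c := ha' c (by simp)
  have had : a < d := ha' d (by simp)
  have hae : a < e := ha' e (by simp)
  have hbc : b < c := hb' c (by simp)
  have hbd : b < d := hb' d (by simp)
  have hbe : b < e := hb' e (by simp)
  have hcd : c < d := hc' d (by simp)
  have hce : c < e := hc' e (by simp)
  have hdee : d < e := hd' e (by simp)
  have hmem : ∀ x ∈ ([a,b,c,d,e] : List ℕ), x ∈ S := by
    intro x hx; rw [← hl] at hx; exact (Finset.mem_sort _).mp hx
  have hpa := Nat.prime_of_mem_primeFactors (hmem a (by simp))
  have hpb := Nat.prime_of_mem_primeFactors (hmem b (by simp))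
  have hpc := Nat.prime_of_mem_primeFactors (hmem c (by simp))
  have hpd := Nat.prime_of_mem_primeFactors (hmem d (by simp))
  have hpe := Nat.prime_of_mem_primeFactors (hmem e (by simp))
  have hda := Nat.dvd_of_mem_primeFactors (hmem a (by simp))
  have hdb := Nat.dvd_of_mem_primeFactors (hmem b (by simp))
  have hdc := Nat.dvd_of_mem_primeFactors (hmem c (by simp))
  have hdd := Nat.dvd_of_mem_primeFactors (hmem d (by simp))
  have hdE := Nat.dvd_of_mem_primeFactors (hmem e (by simp))
  have ha2 : a ≠ 2 := fun h => hodd (h ▸ hda)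
  have hb2 : b ≠ 2 := fun h => hodd (h ▸ hdb)
  have hc2 : c ≠ 2 := fun h => hodd (h ▸ hdc)
  have hd2 : d ≠ 2 := fun h => hodd (h ▸ hdd)
  have he2 : e ≠ 2 := fun h => hodd (h ▸ hdE)
  have ha3 : 3 ≤ a := by have := hpa.two_le; omega
  have hb5 : 5 ≤ b := by
    rcases Nat.lt_or_ge b 5 with h | h
    · have : b = 4 := by omega
      rw [this] at hpb
      exact absurd hpb (by norm_num)
    · exact h
  have hc7 : 7 ≤ c := by
    rcases Nat.lt_or_ge c 7 with h | h
    · have : c = 6 := by omega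
      rw [this] at hpc
      exact absurd hpc (by norm_num)
    · exact h
  -- product
  have hprod : a*b*c*d*e = N := by
    have h1 : ∏ p ∈ S, p = N := Nat.prod_primeFactors_of_squarefree hsf
    have h2 : (Finset.sort S (· ≤ ·)).prod = ∏ x ∈ S, x := by
      rw [← Finset.prod_map_toList]
      simpa using (Finset.sort_perm_toList S (· ≤ ·)).prod_eq
    rw [hl, h1] at h2
    simpa [mul_assoc] using h2
  have hN : a*b*c*d*e < 825265 := by rw [hprod]; exact hlt
  -- bounds
  have ha15 : a ≤ 15 := by
    by_contra hgt
    push_neg at hgt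
    have h16 : 16 ≤ a := hgt
    have hle : 16*16*16*16*16 ≤ a*b*c*d*e := by
      have : (16:ℕ) ≤ b := by omega
      have : (16:ℕ) ≤ c := by omega
      have : (16:ℕ) ≤ d := by omega
      have : (16:ℕ) ≤ e := by omega
      exact Nat.mul_le_mul (Nat.mul_le_mul (Nat.mul_le_mul (Nat.mul_le_mul (by omega) (by omega))
        (by omega)) (by omega)) (by omega)
    omega
  have hb22 : b ≤ 22 := by
    by_contra hgt
    push_neg at hgt
    have hle : 3*23*23*23*23 ≤ a*b*c*d*e :=
      Nat.mul_le_mul (Nat.mul_le_mul (Nat.mul_le_mul (Nat.mul_le_mul (by omega) (by omega))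
        (by omega)) (by omega)) (by omega)
    omega
  have hc38 : c ≤ 38 := by
    by_contra hgt
    push_neg at hgt
    have hle : 3*5*39*39*39 ≤ a*b*c*d*e :=
      Nat.mul_le_mul (Nat.mul_le_mul (Nat.mul_le_mul (Nat.mul_le_mul (by omega) (by omega))
        (by omega)) (by omega)) (by omega)
    omega
  have hd88 : d ≤ 88 := by
    by_contra hgt
    push_neg at hgt
    have hle : 3*5*7*89*89 ≤ a*b*c*d*e :=
      Nat.mul_le_mul (Nat.mul_le_mul (Nat.mul_le_mul (Nat.mul_le_mul (by omega) (by omega))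
        (by omega)) (by omega)) (by omega)
    omega
  have hmA : a ∈ L1 := mem_L1 hpa ha2 ha15
  have hmB : b ∈ L2 := mem_L2 hpb hb2 hb22
  have hmC : c ∈ L3 := mem_L3 hpc hc2 hc38
  have hmD : d ∈ L4 := mem_L4 hpd hd2 hd88
  -- extract tloop
  have h0 := outerCheck_true
  rw [outerCheck] at h0
  have h1 := List.all_eq_true.mp h0 a hmA
  have h2 := List.all_eq_true.mp h1 b hmB
  have h3 := List.all_eq_true.mp h2 c hmC
  have h4 := List.all_eq_true.mp h3 d hmD
  have htloop : tloop 400 a b c d 3 = true := by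
    rw [Bool.or_eq_true] at h4
    rcases h4 with h4 | h4
    · simp [hab, hbc, hcd] at h4
    · exact h4
  -- e = 3 + 2k
  obtain ⟨j, hj⟩ := hpe.odd_of_ne_two he2
  obtain ⟨k, hk⟩ : ∃ k, e = 3 + 2*k := ⟨j - 1, by omega⟩
  have hsmall : a*b*c*d*(3+2*k) < 825265 := by rw [← hk]; exact hN
  have hkor := tloop_sound 400 a b c d 3 htloop k hsmall
  rw [← hk] at hkor
  -- korTest must be false
  have hcoea : Nat.Coprime e a := (Nat.coprime_primes hpe hpa).mpr (by omega)
  have hcoeb : Nat.Coprime e b := (Nat.coprime_primes hpe hpb).mpr (by omega)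
  have hcoec : Nat.Coprime e c := (Nat.coprime_primes hpe hpc).mpr (by omega)
  have hcoed : Nat.Coprime e d := (Nat.coprime_primes hpe hpd).mpr (by omega)
  have hgcd : Nat.gcd e (a*b*c*d) = 1 :=
    Nat.Coprime.mul_right (Nat.Coprime.mul_right (Nat.Coprime.mul_right hcoea hcoeb) hcoec) hcoed
  have hmoda : (N - 1) % (a - 1) = 0 :=
    Nat.dvd_iff_mod_eq_zero.mp (carmichael_dvd hC hpa hda)
  have hmodb : (N - 1) % (b - 1) = 0 :=
    Nat.dvd_iff_mod_eq_zero.mp (carmichael_dvd hC hpb hdb)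
  have hmodc : (N - 1) % (c - 1) = 0 :=
    Nat.dvd_iff_mod_eq_zero.mp (carmichael_dvd hC hpc hdc)
  have hmodd : (N - 1) % (d - 1) = 0 :=
    Nat.dvd_iff_mod_eq_zero.mp (carmichael_dvd hC hpd hdd)
  have hmode : (N - 1) % (e - 1) = 0 :=
    Nat.dvd_iff_mod_eq_zero.mp (carmichael_dvd hC hpe hdE)
  have hkf : korTest a b c d e = false := by
    simp only [korTest, Bool.not_eq_false', Bool.and_eq_true, decide_eq_true_eq]
    rw [hprod]
    exact ⟨⟨⟨⟨⟨hgcd, hmoda⟩, hmodb⟩, hmodc⟩, hmodd⟩, hmode⟩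
  rw [hkor] at hkf
  exact absurd hkf (by simp)
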